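/- Orthogonality of centered and mean parts: for all attributes a, a' and treatments r, r', Cov(B_{[a]}(r), C_{[a']}(r')) = 0, where C_{[a']}(r') = (n_{[a']} π_{[a']}(r'))^{-1} Σ_{j:A_j=a'} 1{R_j=r'} \bar{Y}_{[a']}(r'). -/

import Mathlib

/-!
`B_{[a]}(r)` is a combination of the indicators `1{R_i = r}`, `A i = a`, whose weights
`Y_i(r) - Ȳ_{[a]}(r)` sum to zero, and `C_{[a']}(r')` is a multiple of the number of units of
attribute `a'` receiving `r'`. So `E[B]` and `E[BC]` are both of the form `Σ_{A i = a} y_i f(i)`,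
with `f(i) = P(R_i = r)`, respectively `f(i) = Σ_{A j = a'} P(R_i = r, R_j = r')`, and both vanish
as soon as `f` depends on `i` only through `A i`. For the second `f` this holds because swapping
two units of the same attribute permutes the class `a'` and, by exchangeability, leaves every
joint probability unchanged.
-/

open Finset MeasureTheory

variable {Ω : Type*} [MeasurableSpace Ω] {n H : ℕ} {𝓡 : Type*} [DecidableEq 𝓡]

/-- Number of units with attribute `a`. -/
def nAttr (A : Fin n → Fin H) (a : Fin H) : ℕ := (univ.filter (fun i => A i = a)).card

/-- Subgroup average potential outcome `Ȳ_{[a]}(r)`. -/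
noncomputable def subMean (A : Fin n → Fin H) (Y : Fin n → 𝓡 → ℝ) (a : Fin H) (r : 𝓡) : ℝ :=
  (nAttr A a : ℝ)⁻¹ * ∑ i ∈ univ.filter (fun i => A i = a), Y i r

/-- Centered Horvitz–Thompson term `B_{[a]}(r)`. -/
noncomputable def Bterm (A : Fin n → Fin H) (Y : Fin n → 𝓡 → ℝ) (R : Fin n → Ω → 𝓡)
    (π : Fin H → 𝓡 → ℝ) (a : Fin H) (r : 𝓡) (ω : Ω) : ℝ :=
  ((nAttr A a : ℝ) * π a r)⁻¹ *
    ∑ i ∈ univ.filter (fun i => A i = a),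
      (if R i ω = r then Y i r - subMean A Y a r else 0)

/-- Mean part `C_{[a']}(r') = (n_{[a']} π_{[a']}(r'))⁻¹ Σ_{j:A_j=a'} 1{R_j=r'} Ȳ_{[a']}(r')`. -/
noncomputable def Cterm (A : Fin n → Fin H) (Y : Fin n → 𝓡 → ℝ) (R : Fin n → Ω → 𝓡)
    (π : Fin H → 𝓡 → ℝ) (a : Fin H) (r : 𝓡) (ω : Ω) : ℝ :=
  ((nAttr A a : ℝ) * π a r)⁻¹ *
    ∑ i ∈ univ.filter (fun i => A i = a),
      (if R i ω = r then subMean A Y a r else 0)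

/-- Covariance `Cov(X,Z) = E[XZ] − E[X]E[Z]`. -/
noncomputable def covar (μ : Measure Ω) (X Z : Ω → ℝ) : ℝ :=
  (∫ ω, X ω * Z ω ∂μ) - (∫ ω, X ω ∂μ) * (∫ ω, Z ω ∂μ)


lemma Equiv.apply_swap_apply_of_eq {ι α : Type*} [DecidableEq ι] {A : ι → α} {i i' : ι}
    (hi : A i = A i') (j : ι) : A (Equiv.swap i i' j) = A j := by
  rcases eq_or_ne j i with rfl | hji
  · rw [Equiv.swap_apply_left, hi]
  rcases eq_or_ne j i' with rfl | hji'
  · rw [Equiv.swap_apply_right, hi]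
  · rw [Equiv.swap_apply_of_ne_of_ne hji hji']

lemma sum_filter_eq_of_exchangeable {ι α M : Type*} [Fintype ι] [DecidableEq ι] [DecidableEq α]
    [AddCommMonoid M] (A : ι → α) (p : ι → ι → M)
    (hp : ∀ k l k' l', A k = A k' → A l = A l' → (k = l ↔ k' = l') → p k l = p k' l')
    (b : α) {i i' : ι} (hi : A i = A i') :
    ∑ j ∈ univ.filter (fun j => A j = b), p i j = ∑ j ∈ univ.filter (fun j => A j = b), p i' j := by
  refine Finset.sum_equiv (Equiv.swap i i') (fun j => ?_) (fun j _ => ?_)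
  · simp only [mem_filter, mem_univ, true_and, Equiv.apply_swap_apply_of_eq hi]
  · refine hp _ _ _ _ hi (Equiv.apply_swap_apply_of_eq hi j).symm ?_
    rw [← (Equiv.swap i i').injective.eq_iff, Equiv.swap_apply_left]

lemma measureReal_eq_and_eq {β : Type*} (μ : Measure Ω) (X : Ω → β) (t t' : β)
    [Decidable (t = t')] :
    μ.real {ω | X ω = t ∧ X ω = t'} = if t = t' then μ.real {ω | X ω = t} else 0 := by
  split_ifs with h
  · simp [h]
  · have hempty : {ω | X ω = t ∧ X ω = t'} = ∅ := by
      ext ω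
      simp only [Set.mem_ofPred_eq, Set.mem_empty_iff_false, iff_false, not_and]
      rintro rfl
      exact h
    simp [hempty]

lemma integral_sum_ite {ι : Type*} (μ : Measure Ω) [IsFiniteMeasure μ] (s : Finset ι)
    (P : ι → Ω → Prop) [∀ i, DecidablePred (P i)] (hP : ∀ i, MeasurableSet {ω | P i ω})
    (x : ι → ℝ) :
    ∫ ω, ∑ i ∈ s, (if P i ω then x i else 0) ∂μ = ∑ i ∈ s, x i * μ.real {ω | P i ω} := by
  have hind : ∀ i ω, (if P i ω then x i else 0) = {ω | P i ω}.indicator (fun _ => x i) ω :=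
    fun i ω => by simp [Set.indicator_apply]
  simp_rw [hind]
  rw [integral_finsetSum _ fun i _ => (integrable_const (x i)).indicator (hP i)]
  simp [integral_indicator_const _ (hP _), mul_comm]

lemma sum_sub_subMean {ρ : Type*} (A : Fin n → Fin H) (Y : Fin n → ρ → ℝ) (a : Fin H) (r : ρ) :
    ∑ i ∈ univ.filter (fun i => A i = a), (Y i r - subMean A Y a r) = 0 := by
  rw [sum_sub_distrib, sum_const, nsmul_eq_mul, subMean, nAttr]
  rcases (univ.filter fun i => A i = a).eq_empty_or_nonempty with h | h
  · simp [h]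
  · rw [mul_inv_cancel_left₀ (Nat.cast_ne_zero.mpr h.card_pos.ne'), sub_self]

lemma sum_sub_subMean_mul_eq_zero {ρ : Type*} (A : Fin n → Fin H) (Y : Fin n → ρ → ℝ)
    (a : Fin H) (r : ρ) (c : Fin n → ℝ) (hc : ∀ i i', A i = A i' → c i = c i') :
    ∑ i ∈ univ.filter (fun i => A i = a), (Y i r - subMean A Y a r) * c i = 0 := by
  rcases (univ.filter fun i => A i = a).eq_empty_or_nonempty with h | ⟨i₀, hi₀⟩
  · simp [h]
  have hconst : ∀ i ∈ univ.filter (fun i => A i = a), c i = c i₀ := fun i hi =>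
    hc i i₀ ((mem_filter.1 hi).2.trans (mem_filter.1 hi₀).2.symm)
  rw [sum_congr rfl fun i hi => by rw [hconst i hi], ← sum_mul, sum_sub_subMean, zero_mul]

lemma integral_Bterm {ρ : Type*} [DecidableEq ρ] (μ : Measure Ω) [IsFiniteMeasure μ]
    (A : Fin n → Fin H) (Y : Fin n → ρ → ℝ) (R : Fin n → Ω → ρ)
    (hmeas : ∀ i t, MeasurableSet {ω | R i ω = t}) (π : Fin H → ρ → ℝ) (a : Fin H) (r : ρ) :
    ∫ ω, Bterm A Y R π a r ω ∂μ = ((nAttr A a : ℝ) * π a r)⁻¹ *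
      ∑ i ∈ univ.filter (fun i => A i = a),
        (Y i r - subMean A Y a r) * μ.real {ω | R i ω = r} := by
  unfold Bterm
  rw [integral_const_mul, integral_sum_ite μ _ (fun i ω => R i ω = r) (fun i => hmeas i r)]

lemma Bterm_mul_Cterm {Ω' ρ : Type*} [DecidableEq ρ] (A : Fin n → Fin H) (Y : Fin n → ρ → ℝ)
    (R : Fin n → Ω' → ρ) (π : Fin H → ρ → ℝ) (a a' : Fin H) (r r' : ρ) (ω : Ω') :
    Bterm A Y R π a r ω * Cterm A Y R π a' r' ω =
      ((nAttr A a : ℝ) * π a r)⁻¹ * ((nAttr A a' : ℝ) * π a' r')⁻¹ *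
        ∑ ij ∈ univ.filter (fun i => A i = a) ×ˢ univ.filter (fun j => A j = a'),
          if R ij.1 ω = r ∧ R ij.2 ω = r' then
            (Y ij.1 r - subMean A Y a r) * subMean A Y a' r' else 0 := by
  rw [Bterm, Cterm, mul_mul_mul_comm, sum_mul_sum, sum_product]
  simp only [ite_zero_mul_ite_zero]

lemma integral_Bterm_mul_Cterm {ρ : Type*} [DecidableEq ρ] (μ : Measure Ω) [IsFiniteMeasure μ]
    (A : Fin n → Fin H) (Y : Fin n → ρ → ℝ) (R : Fin n → Ω → ρ)
    (hmeas : ∀ i t, MeasurableSet {ω | R i ω = t}) (π : Fin H → ρ → ℝ)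
    (a a' : Fin H) (r r' : ρ) :
    ∫ ω, Bterm A Y R π a r ω * Cterm A Y R π a' r' ω ∂μ =
      ((nAttr A a : ℝ) * π a r)⁻¹ * ((nAttr A a' : ℝ) * π a' r')⁻¹ * subMean A Y a' r' *
        ∑ i ∈ univ.filter (fun i => A i = a), (Y i r - subMean A Y a r) *
          ∑ j ∈ univ.filter (fun j => A j = a'), μ.real {ω | R i ω = r ∧ R j ω = r'} := by
  simp_rw [Bterm_mul_Cterm]
  rw [integral_const_mul,
    integral_sum_ite μ _ (fun (ij : Fin n × Fin n) ω => R ij.1 ω = r ∧ R ij.2 ω = r')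
      (fun ij => (hmeas ij.1 r).inter (hmeas ij.2 r')), sum_product]
  simp only [mul_sum]
  exact sum_congr rfl fun i _ => sum_congr rfl fun j _ => by ring

theorem cov_Bterm_Cterm_zero_general
    (μ : Measure Ω) [IsProbabilityMeasure μ]
    (A : Fin n → Fin H) (Y : Fin n → 𝓡 → ℝ) (R : Fin n → Ω → 𝓡)
    (hmeas : ∀ (i : Fin n) (t : 𝓡), MeasurableSet {ω | R i ω = t})
    (π : Fin H → 𝓡 → ℝ)
    (π2 : Fin H → Fin H → 𝓡 → 𝓡 → ℝ)
    (hmarg : ∀ (i : Fin n) (t : 𝓡), (μ {ω | R i ω = t}).toReal = π (A i) t)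
    (hjoint : ∀ (i j : Fin n), i ≠ j → ∀ (t t' : 𝓡),
      (μ {ω | R i ω = t ∧ R j ω = t'}).toReal = π2 (A i) (A j) t t')
    (a a' : Fin H) (r r' : 𝓡) :
    covar μ (Bterm A Y R π a r) (Cterm A Y R π a' r') = 0 := by
  simp only [← measureReal_def] at hmarg hjoint
  have hpair : ∀ k l k' l', A k = A k' → A l = A l' → (k = l ↔ k' = l') →
      μ.real {ω | R k ω = r ∧ R l ω = r'} = μ.real {ω | R k' ω = r ∧ R l' ω = r'} := by
    intro k l k' l' hk hl hkl
    by_cases h : k = l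
    · obtain rfl := h
      obtain rfl := hkl.1 rfl
      rw [measureReal_eq_and_eq, measureReal_eq_and_eq, hmarg, hmarg, hk]
    · rw [hjoint k l h, hjoint k' l' (mt hkl.2 h), hk, hl]
  have hmean : ∫ ω, Bterm A Y R π a r ω ∂μ = 0 := by
    rw [integral_Bterm μ A Y R hmeas, sum_sub_subMean_mul_eq_zero _ _ _ _ _
      fun i i' h => by rw [hmarg, hmarg, h], mul_zero]
  have hprod : ∫ ω, Bterm A Y R π a r ω * Cterm A Y R π a' r' ω ∂μ = 0 := by
    rw [integral_Bterm_mul_Cterm μ A Y R hmeas, sum_sub_subMean_mul_eq_zero _ _ _ _ _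
      fun i i' h => sum_filter_eq_of_exchangeable A _ hpair a' h, mul_zero]
  rw [covar, hprod, hmean, zero_mul, sub_zero]

/-- Orthogonality of the centered and mean parts: for all attributes `a, a'`
and treatments `r, r'`, `Cov(B_{[a]}(r), C_{[a']}(r')) = 0` under the
exchangeable treatment assignment assumption. -/
theorem cov_Bterm_Cterm_zero
    (μ : Measure Ω) [IsProbabilityMeasure μ]
    (A : Fin n → Fin H) (Y : Fin n → 𝓡 → ℝ) (R : Fin n → Ω → 𝓡)
    (hmeas : ∀ (i : Fin n) (t : 𝓡), MeasurableSet {ω | R i ω = t})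
    (π : Fin H → 𝓡 → ℝ) (hπ : ∀ a t, 0 < π a t)
    (π2 : Fin H → Fin H → 𝓡 → 𝓡 → ℝ)
    (hmarg : ∀ (i : Fin n) (t : 𝓡), (μ {ω | R i ω = t}).toReal = π (A i) t)
    (hjoint : ∀ (i j : Fin n), i ≠ j → ∀ (t t' : 𝓡),
      (μ {ω | R i ω = t ∧ R j ω = t'}).toReal = π2 (A i) (A j) t t')
    (a a' : Fin H) (r r' : 𝓡) :
    covar μ (Bterm A Y R π a r) (Cterm A Y R π a' r') = 0 :=
  cov_Bterm_Cterm_zero_general μ A Y R hmeas π π2 hmarg hjoint a a' r r'
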